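/- Let X be a nonnegative random variable with all moments finite, and for each ρ > 0 let Y_ρ be such that conditionally on X, Y_ρ ~ Poisson(ρX). Then for every m ≥ 0, E[(ρ^{-1/2}(Y_ρ − ρX))^{2m}] → (2m−1)!! E[X^m] and E[(ρ^{-1/2}(Y_ρ − ρX))^{2m+1}] → 0 as ρ → ∞. -/

import Mathlib

open MeasureTheory ProbabilityTheory Filter Real Finset

/-- `Y` is, conditionally on `X`, Poisson distributed with rate `ρ * X`. -/
def CondPoisson {Ω : Type*} [MeasurableSpace Ω] (μ : Measure Ω)
    (X : Ω → ℝ) (Y : Ω → ℕ) (ρ : ℝ) : Prop :=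
  ∀ (ℓ : ℕ) (A : Set ℝ), MeasurableSet A →
    μ {ω | X ω ∈ A ∧ Y ω = ℓ}
      = ∫⁻ ω in {ω | X ω ∈ A},
          ENNReal.ofReal ((ρ * X ω) ^ ℓ * Real.exp (-(ρ * X ω)) / ℓ.factorial) ∂μ

/-! The `n`-th central moment of a Poisson(`r`) variable `N` is a polynomial `Qₙ(r)`
(`poissonCentralMomentPoly n`): the size-biasing identity `E[N f(N)] = r E[f(N + 1)]`, applied
to `f(ℓ) = (ℓ - r)ⁿ` and expanded binomially, gives `Qₙ₊₁ = r ∑_{k<n} C(n,k) Qₖ`. Hence `Qₙ` has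
degree at most `n / 2`, and the coefficient of `rᵐ` in `Q₂ₘ` obeys `c_{m+1} = (2m+1) cₘ`, so
equals `(2m-1)!!`. Conditioning on `X`, `E[(Y_ρ - ρX)ⁿ] = E[Qₙ(ρX)] = ∑ⱼ qₙⱼ ρʲ E[Xʲ]`; divided
by `ρ^{n/2}`, every term with `2j < n` vanishes as `ρ → ∞`, leaving `(2m-1)!! E[Xᵐ]` for `n = 2m`
and `0` for odd `n`. -/

open scoped ENNReal Nat Polynomial Topology

noncomputable def poissonWeight (r : ℝ) (ℓ : ℕ) : ℝ := r ^ ℓ * exp (-r) / ℓ !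

lemma poissonWeight_nonneg {r : ℝ} (hr : 0 ≤ r) (ℓ : ℕ) : 0 ≤ poissonWeight r ℓ := by
  unfold poissonWeight; positivity

lemma hasSum_poissonWeight (r : ℝ) : HasSum (poissonWeight r) 1 := by
  have h := (NormedSpace.expSeries_div_hasSum_exp r).mul_right (exp (-r))
  rw [← Real.exp_eq_exp_ℝ, ← exp_add, add_neg_cancel, exp_zero] at h
  exact h.congr_fun fun ℓ => by simp only [poissonWeight]; ring

lemma natCast_succ_mul_poissonWeight_succ (r : ℝ) (j : ℕ) :
    ((j : ℝ) + 1) * poissonWeight r (j + 1) = r * poissonWeight r j := by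
  simp only [poissonWeight, Nat.factorial_succ, Nat.cast_mul, Nat.cast_succ, pow_succ]
  field_simp

lemma HasSum.natCast_mul_poissonWeight {r a : ℝ} {f : ℕ → ℝ}
    (h : HasSum (fun j => poissonWeight r j * f (j + 1)) a) :
    HasSum (fun ℓ => poissonWeight r ℓ * ((ℓ : ℝ) * f ℓ)) (r * a) := by
  rw [← hasSum_nat_add_iff' 1]
  simpa [← mul_assoc, mul_comm _ ((_ : ℝ) + 1), natCast_succ_mul_poissonWeight_succ]
    using h.mul_left r

noncomputable def poissonCentralMomentPoly : ℕ → ℝ[X]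
  | 0 => 1
  | n + 1 => Polynomial.X * ∑ k : Fin n, (n.choose k : ℝ) • poissonCentralMomentPoly k

lemma poissonCentralMomentPoly_zero : poissonCentralMomentPoly 0 = 1 := by
  rw [poissonCentralMomentPoly]

lemma poissonCentralMomentPoly_succ (n : ℕ) :
    poissonCentralMomentPoly (n + 1)
      = Polynomial.X * ∑ k ∈ range n, (n.choose k : ℝ) • poissonCentralMomentPoly k := by
  rw [poissonCentralMomentPoly,
    Fin.sum_univ_eq_sum_range (fun k => (n.choose k : ℝ) • poissonCentralMomentPoly k)]

lemma coeff_poissonCentralMomentPoly_of_lt_two_mul {n j : ℕ} (h : n < 2 * j) :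
    (poissonCentralMomentPoly n).coeff j = 0 := by
  induction n using Nat.strong_induction_on generalizing j with
  | _ n ih =>
    rcases n with _ | n
    · rw [poissonCentralMomentPoly_zero, Polynomial.coeff_one, if_neg (by omega)]
    rcases j with _ | j
    · omega
    rw [poissonCentralMomentPoly_succ, Polynomial.coeff_X_mul, Polynomial.finsetSum_coeff]
    refine sum_eq_zero fun k hk => ?_
    rw [Polynomial.coeff_smul, ih k (by simp at hk; omega) (by simp at hk; omega), smul_zero]

lemma natDegree_poissonCentralMomentPoly_le (n : ℕ) :
    (poissonCentralMomentPoly n).natDegree ≤ n / 2 :=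
  Polynomial.natDegree_le_iff_coeff_eq_zero.mpr fun _ hj =>
    coeff_poissonCentralMomentPoly_of_lt_two_mul (by omega)

lemma coeff_poissonCentralMomentPoly_two_mul_self (m : ℕ) :
    (poissonCentralMomentPoly (2 * m)).coeff m = (2 * m - 1)‼ := by
  induction m with
  | zero => simp [poissonCentralMomentPoly_zero]
  | succ m ih =>
    rw [show 2 * (m + 1) = 2 * m + 1 + 1 by ring, poissonCentralMomentPoly_succ,
      Polynomial.coeff_X_mul, Polynomial.finsetSum_coeff, sum_eq_single_of_mem (2 * m) (by simp),
      Polynomial.coeff_smul, ih, Nat.choose_succ_self_right,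
      show 2 * m + 1 + 1 - 1 = 2 * m + 1 by omega, Nat.doubleFactorial_add_one, smul_eq_mul]
    · push_cast; ring
    · intro k hk _
      rw [Polynomial.coeff_smul,
        coeff_poissonCentralMomentPoly_of_lt_two_mul (by simp at hk; omega), smul_zero]

lemma hasSum_poissonWeight_mul_sub_pow (n : ℕ) (r : ℝ) :
    HasSum (fun ℓ : ℕ => poissonWeight r ℓ * ((ℓ : ℝ) - r) ^ n)
      ((poissonCentralMomentPoly n).eval r) := by
  induction n using Nat.strong_induction_on with
  | _ n ih =>
    rcases n with _ | n
    · simpa [poissonCentralMomentPoly_zero] using hasSum_poissonWeight r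
    have hshift : HasSum (fun j : ℕ => poissonWeight r j * (((j + 1 : ℕ) : ℝ) - r) ^ n)
        (∑ k ∈ range (n + 1), n.choose k * (poissonCentralMomentPoly k).eval r) := by
      refine (hasSum_sum fun k hk => (ih k (by simp at hk; omega)).mul_left (n.choose k : ℝ))
        |>.congr_fun fun j => ?_
      rw [Nat.cast_succ, add_sub_right_comm, add_pow, mul_sum]
      exact sum_congr rfl fun k _ => by ring
    have hstep := (hshift.natCast_mul_poissonWeight (f := fun ℓ : ℕ => ((ℓ : ℝ) - r) ^ n)).sub
      ((ih n n.lt_succ_self).mul_left r)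
    rw [sum_range_succ, Nat.choose_self, Nat.cast_one, one_mul, mul_add, add_sub_cancel_right]
      at hstep
    rw [poissonCentralMomentPoly_succ, Polynomial.eval_mul, Polynomial.eval_X,
      Polynomial.eval_finsetSum]
    simp only [Polynomial.eval_smul, smul_eq_mul]
    exact hstep.congr_fun fun ℓ => by ring

section CondPoisson

variable {Ω : Type*} [MeasurableSpace Ω] {μ : Measure Ω} {X : Ω → ℝ} {Y : Ω → ℕ} {ρ : ℝ}

lemma CondPoisson.map_restrict_eq (hc : CondPoisson μ X Y ρ) (hX : Measurable X) (ℓ : ℕ) :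
    (μ.restrict (Y ⁻¹' {ℓ})).map X
      = (μ.withDensity fun ω => ENNReal.ofReal (poissonWeight (ρ * X ω) ℓ)).map X := by
  ext A hA
  rw [Measure.map_apply hX hA, Measure.map_apply hX hA, Measure.restrict_apply (hX hA),
    withDensity_apply _ (hX hA)]
  exact hc ℓ A hA

lemma CondPoisson.setLIntegral_eq (hc : CondPoisson μ X Y ρ) (hX : Measurable X) (ℓ : ℕ)
    {g : ℝ → ℝ≥0∞} (hg : Measurable g) :
    ∫⁻ ω in Y ⁻¹' {ℓ}, g (X ω) ∂μ
      = ∫⁻ ω, ENNReal.ofReal (poissonWeight (ρ * X ω) ℓ) * g (X ω) ∂μ := by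
  rw [← lintegral_map hg hX, hc.map_restrict_eq hX, lintegral_map hg hX]
  exact lintegral_withDensity_eq_lintegral_mul _ (by unfold poissonWeight; fun_prop) (hg.comp hX)

lemma CondPoisson.setIntegral_eq (hc : CondPoisson μ X Y ρ) (hX : Measurable X)
    (hρX : ∀ ω, 0 ≤ ρ * X ω) (ℓ : ℕ) {f : ℝ → ℝ} (hf : Measurable f) :
    ∫ ω in Y ⁻¹' {ℓ}, f (X ω) ∂μ = ∫ ω, poissonWeight (ρ * X ω) ℓ * f (X ω) ∂μ := by
  rw [← integral_map hX.aemeasurable hf.aestronglyMeasurable, hc.map_restrict_eq hX,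
    integral_map hX.aemeasurable hf.aestronglyMeasurable,
    integral_withDensity_eq_integral_toReal_smul (by unfold poissonWeight; fun_prop)
      (.of_forall fun _ => ENNReal.ofReal_lt_top)]
  simp only [ENNReal.toReal_ofReal (poissonWeight_nonneg (hρX _) ℓ), smul_eq_mul]

lemma Set.iUnion_preimage_singleton {α β : Type*} (Y : α → β) : ⋃ b, Y ⁻¹' {b} = Set.univ := by
  rw [← Set.preimage_iUnion, Set.iUnion_of_singleton, Set.preimage_univ]

lemma CondPoisson.lintegral_eq_tsum (hc : CondPoisson μ X Y ρ) (hX : Measurable X)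
    (hY : Measurable Y) {g : ℕ → ℝ → ℝ≥0∞} (hg : ∀ ℓ, Measurable (g ℓ)) :
    ∫⁻ ω, g (Y ω) (X ω) ∂μ
      = ∑' ℓ, ∫⁻ ω, ENNReal.ofReal (poissonWeight (ρ * X ω) ℓ) * g ℓ (X ω) ∂μ := by
  rw [← setLIntegral_univ, ← Set.iUnion_preimage_singleton Y,
    lintegral_iUnion (fun ℓ => hY (measurableSet_singleton ℓ)) (pairwise_disjoint_fiber Y)]
  refine tsum_congr fun ℓ => ?_
  rw [← hc.setLIntegral_eq hX ℓ (hg ℓ)]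
  exact setLIntegral_congr_fun (hY (measurableSet_singleton ℓ)) fun ω (hω : Y ω = ℓ) => by
    rw [hω]

lemma CondPoisson.integral_eq_integral_tsum (hc : CondPoisson μ X Y ρ) (hX : Measurable X)
    (hY : Measurable Y) (hρX : ∀ ω, 0 ≤ ρ * X ω) {f : ℕ → ℝ → ℝ} (hf : ∀ ℓ, Measurable (f ℓ))
    (hint : Integrable (fun ω => f (Y ω) (X ω)) μ) :
    ∫ ω, f (Y ω) (X ω) ∂μ = ∫ ω, ∑' ℓ, poissonWeight (ρ * X ω) ℓ * f ℓ (X ω) ∂μ := by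
  have hmeas : ∀ ℓ, Measurable fun ω => poissonWeight (ρ * X ω) ℓ * f ℓ (X ω) := fun ℓ =>
    by unfold poissonWeight; fun_prop
  have hfin : ∑' ℓ, ∫⁻ ω, ‖poissonWeight (ρ * X ω) ℓ * f ℓ (X ω)‖ₑ ∂μ ≠ ∞ := by
    simp_rw [enorm_mul, Real.enorm_of_nonneg (poissonWeight_nonneg (hρX _) _)]
    rw [← hc.lintegral_eq_tsum hX hY fun ℓ => (hf ℓ).enorm]
    exact hint.2.ne
  rw [integral_tsum (fun ℓ => (hmeas ℓ).aestronglyMeasurable) hfin, ← setIntegral_univ,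
    ← Set.iUnion_preimage_singleton Y, integral_iUnion (fun ℓ => hY (measurableSet_singleton ℓ))
      (pairwise_disjoint_fiber Y) (by rw [Set.iUnion_preimage_singleton]; exact hint.integrableOn)]
  refine tsum_congr fun ℓ => ?_
  rw [← hc.setIntegral_eq hX hρX ℓ (hf ℓ)]
  exact setIntegral_congr_fun (hY (measurableSet_singleton ℓ)) fun ω (hω : Y ω = ℓ) => by
    rw [hω]

end CondPoisson

section Moments

variable {Ω : Type*} [MeasurableSpace Ω] {μ : Measure Ω} {X : Ω → ℝ}

lemma eval_const_mul_eq_sum {p : ℝ[X]} {N : ℕ} (hN : p.natDegree < N) (c x : ℝ) :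
    p.eval (c * x) = ∑ j ∈ range N, p.coeff j * c ^ j * x ^ j := by
  rw [Polynomial.eval_eq_sum_range' hN]
  exact sum_congr rfl fun j _ => by ring

lemma integrable_eval_const_mul (hmom : ∀ s : ℕ, Integrable (fun ω => X ω ^ s) μ)
    (p : ℝ[X]) (c : ℝ) : Integrable (fun ω => p.eval (c * X ω)) μ := by
  simp_rw [eval_const_mul_eq_sum p.natDegree.lt_succ_self]
  exact integrable_finsetSum _ fun j _ => (hmom j).const_mul _

lemma integral_eval_const_mul (hmom : ∀ s : ℕ, Integrable (fun ω => X ω ^ s) μ)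
    {p : ℝ[X]} {N : ℕ} (hN : p.natDegree < N) (c : ℝ) :
    ∫ ω, p.eval (c * X ω) ∂μ = ∑ j ∈ range N, p.coeff j * (∫ ω, X ω ^ j ∂μ) * c ^ j := by
  simp_rw [eval_const_mul_eq_sum hN]
  rw [integral_finsetSum _ fun j _ => (hmom j).const_mul _]
  exact sum_congr rfl fun j _ => by rw [integral_const_mul]; ring

variable {Y : Ω → ℕ} {ρ : ℝ}

lemma CondPoisson.lintegral_ofReal_sub_pow_two_mul (hc : CondPoisson μ X Y ρ)
    (hX : Measurable X) (hY : Measurable Y) (hρX : ∀ ω, 0 ≤ ρ * X ω) (n : ℕ) :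
    ∫⁻ ω, ENNReal.ofReal (((Y ω : ℝ) - ρ * X ω) ^ (2 * n)) ∂μ
      = ∫⁻ ω, ENNReal.ofReal ((poissonCentralMomentPoly (2 * n)).eval (ρ * X ω)) ∂μ := by
  rw [hc.lintegral_eq_tsum hX hY (g := fun ℓ x => ENNReal.ofReal (((ℓ : ℝ) - ρ * x) ^ (2 * n)))
    (fun ℓ => by fun_prop), ← lintegral_tsum fun ℓ => by unfold poissonWeight; fun_prop]
  refine lintegral_congr fun ω => ?_
  have hsum := hasSum_poissonWeight_mul_sub_pow (2 * n) (ρ * X ω)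
  rw [← hsum.tsum_eq, ENNReal.ofReal_tsum_of_nonneg (fun ℓ => mul_nonneg
    (poissonWeight_nonneg (hρX ω) ℓ) ((even_two_mul n).pow_nonneg _)) hsum.summable]
  simp_rw [ENNReal.ofReal_mul (poissonWeight_nonneg (hρX ω) _)]

lemma CondPoisson.integrable_sub_pow [IsFiniteMeasure μ] (hc : CondPoisson μ X Y ρ)
    (hX : Measurable X) (hY : Measurable Y) (hρX : ∀ ω, 0 ≤ ρ * X ω)
    (hmom : ∀ s : ℕ, Integrable (fun ω => X ω ^ s) μ) (n : ℕ) :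
    Integrable (fun ω => ((Y ω : ℝ) - ρ * X ω) ^ n) μ := by
  have hmeas : ∀ k, Measurable fun ω => ((Y ω : ℝ) - ρ * X ω) ^ k := fun k => by fun_prop
  have heven : Integrable (fun ω => ((Y ω : ℝ) - ρ * X ω) ^ (2 * n)) μ := by
    refine ⟨(hmeas _).aestronglyMeasurable, ?_⟩
    rw [hasFiniteIntegral_iff_ofReal (.of_forall fun ω => (even_two_mul n).pow_nonneg _),
      hc.lintegral_ofReal_sub_pow_two_mul hX hY hρX]
    exact (integrable_eval_const_mul hmom _ ρ).lintegral_lt_top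
  refine ((integrable_const 1).add heven).mono' (hmeas n).aestronglyMeasurable
    (.of_forall fun ω => ?_)
  rw [Real.norm_eq_abs, Pi.add_apply, pow_mul', ← sq_abs]
  nlinarith [sq_nonneg (|((Y ω : ℝ) - ρ * X ω) ^ n| - 1)]

lemma CondPoisson.integral_sub_pow (hc : CondPoisson μ X Y ρ) (hX : Measurable X)
    (hY : Measurable Y) (hρX : ∀ ω, 0 ≤ ρ * X ω) {n : ℕ}
    (hint : Integrable (fun ω => ((Y ω : ℝ) - ρ * X ω) ^ n) μ) :
    ∫ ω, ((Y ω : ℝ) - ρ * X ω) ^ n ∂μ = ∫ ω, (poissonCentralMomentPoly n).eval (ρ * X ω) ∂μ := by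
  rw [hc.integral_eq_integral_tsum hX hY hρX (f := fun ℓ x => ((ℓ : ℝ) - ρ * x) ^ n)
    (fun ℓ => by fun_prop) hint]
  exact integral_congr_ae (.of_forall fun ω =>
    (hasSum_poissonWeight_mul_sub_pow n (ρ * X ω)).tsum_eq)

end Moments

lemma tendsto_sum_mul_pow_div_sqrt_pow (c : ℕ → ℝ) {N n : ℕ} (hN : 2 * N ≤ n) :
    Tendsto (fun ρ : ℝ => (∑ j ∈ range (N + 1), c j * ρ ^ j) / √ρ ^ n) atTop
      (𝓝 (∑ j ∈ range (N + 1), c j * 0 ^ (n - 2 * j))) := by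
  have hinv : Tendsto (fun ρ : ℝ => (√ρ)⁻¹) atTop (𝓝 0) :=
    tendsto_inv_atTop_zero.comp tendsto_sqrt_atTop
  have hcont : Continuous fun t : ℝ => ∑ j ∈ range (N + 1), c j * t ^ (n - 2 * j) := by
    fun_prop
  -- in terms of `t = 1 / √ρ` the quotient is `∑ c j * t ^ (n - 2 * j)`; at `t = 0` only the
  -- term with `2 * j = n` survives
  refine ((hcont.tendsto 0).comp hinv).congr' ?_
  filter_upwards [eventually_gt_atTop 0] with ρ hρ
  have hsqrt : √ρ ≠ 0 := (sqrt_pos.mpr hρ).ne'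
  rw [Function.comp_apply, sum_div]
  refine sum_congr rfl fun j hj => ?_
  have hρj : ρ ^ j = √ρ ^ (2 * j) := by rw [pow_mul, sq_sqrt hρ.le]
  rw [mul_div_assoc, hρj, inv_pow, pow_sub₀ _ hsqrt (by simp at hj; omega), mul_inv, inv_inv,
    div_eq_mul_inv, mul_comm (√ρ ^ (2 * j))]

lemma tendsto_integral_sub_div_sqrt_pow {Ω : Type*} [MeasurableSpace Ω] {μ : Measure Ω}
    [IsFiniteMeasure μ] {X : Ω → ℝ} {Y : ℝ → Ω → ℕ} (hX : Measurable X)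
    (hY : ∀ ρ, Measurable (Y ρ)) (hXnn : ∀ ω, 0 ≤ X ω)
    (hmom : ∀ s : ℕ, Integrable (fun ω => X ω ^ s) μ)
    (hcond : ∀ ρ > (0 : ℝ), CondPoisson μ X (Y ρ) ρ) (n : ℕ) :
    Tendsto (fun ρ : ℝ => ∫ ω, (((Y ρ ω : ℝ) - ρ * X ω) / √ρ) ^ n ∂μ) atTop
      (𝓝 (∑ j ∈ range (n / 2 + 1),
        (poissonCentralMomentPoly n).coeff j * (∫ ω, X ω ^ j ∂μ) * 0 ^ (n - 2 * j))) := by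
  refine (tendsto_sum_mul_pow_div_sqrt_pow
    (fun j => (poissonCentralMomentPoly n).coeff j * ∫ ω, X ω ^ j ∂μ) (by omega)).congr' ?_
  filter_upwards [eventually_gt_atTop 0] with ρ hρ
  have hρX : ∀ ω, 0 ≤ ρ * X ω := fun ω => mul_nonneg hρ.le (hXnn ω)
  have hc := hcond ρ hρ
  simp_rw [div_pow]
  rw [integral_div, hc.integral_sub_pow hX (hY ρ) hρX (hc.integrable_sub_pow hX (hY ρ) hρX hmom n),
    integral_eval_const_mul hmom
      (Nat.lt_succ_of_le (natDegree_poissonCentralMomentPoly_le n)) ρ]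

theorem condPoisson_clt_moment_convergence
    {Ω : Type*} [MeasurableSpace Ω] (μ : Measure Ω) [IsProbabilityMeasure μ]
    (X : Ω → ℝ) (Y : ℝ → Ω → ℕ)
    (hX : Measurable X) (hY : ∀ ρ, Measurable (Y ρ)) (hXnn : ∀ ω, 0 ≤ X ω)
    (hmom : ∀ s : ℕ, Integrable (fun ω => X ω ^ s) μ)
    (hcond : ∀ ρ > (0:ℝ), CondPoisson μ X (Y ρ) ρ) (m : ℕ) :
    Tendsto
        (fun ρ : ℝ => ∫ ω, (((Y ρ ω : ℝ) - ρ * X ω) / Real.sqrt ρ) ^ (2 * m) ∂μ)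
        atTop (nhds ((Nat.doubleFactorial (2 * m - 1) : ℝ) * ∫ ω, X ω ^ m ∂μ))
    ∧ Tendsto
        (fun ρ : ℝ => ∫ ω, (((Y ρ ω : ℝ) - ρ * X ω) / Real.sqrt ρ) ^ (2 * m + 1) ∂μ)
        atTop (nhds 0) := by
  have h := tendsto_integral_sub_div_sqrt_pow hX hY hXnn hmom hcond
  constructor
  · convert h (2 * m) using 2
    rw [show 2 * m / 2 = m by omega, sum_eq_single_of_mem m (by simp), Nat.sub_self, pow_zero,
      mul_one, coeff_poissonCentralMomentPoly_two_mul_self]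
    intro j hj _
    rw [zero_pow (by simp at hj; omega), mul_zero]
  · convert h (2 * m + 1) using 2
    exact (sum_eq_zero fun j hj => by rw [zero_pow (by simp at hj; omega), mul_zero]).symm
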